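/- arXiv:2007.01641 — 3 statements merged into one kernel-verified Lean document; each statement's English description precedes it below -/
import Mathlib

section
/- Let B_w be a bounded unilateral weighted backward shift on ℓ^p(ℕ), 1 ≤ p < ∞, with weight sequence (wₙ)_{n≥1} of nonzero scalars. If there exist x ∈ ℓ^p and a nonzero y ∈ ℓ^p such that y is a limit point of the orbit (B_w^n x)_{n≥0}, then sup_{n≥1} ∏_{ν=1}^n |w_ν| = ∞. -/
/-!
The iterates act coordinatewise by `(B_w^n x)_i = w_{i+1} ⋯ w_{i+n} x_{i+n}`. If the products
`|w_1 ⋯ w_n|` were bounded by `M`, this coefficient would be at most `M / |w_1 ⋯ w_i|`, so each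
coordinate of the orbit would tend to `0` along with `x_{i+n}`. But convergence in `ℓᵖ` along a
subsequence forces convergence of every coordinate, and some coordinate of `y` is nonzero.
-/

open Filter Topology Finset

def weightedShift {R : Type*} [Mul R] (w z : ℕ → R) : ℕ → R :=
  fun i => w (i + 1) * z (i + 1)

theorem weightedShift_iterate_apply {R : Type*} [CommMonoid R] (w z : ℕ → R) (n i : ℕ) :
    (weightedShift w)^[n] z i = (∏ ν ∈ Ioc i (i + n), w ν) * z (i + n) := by
  induction n generalizing z with
  | zero => simp
  | succ n ih =>
    rw [Function.iterate_succ_apply, ih, ← add_assoc,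
      prod_Ioc_succ_top (Nat.le_add_right i n), weightedShift, mul_assoc]

section Summable

variable {p : ℝ}

theorem summable_abs_sub_rpow (hp : 0 < p) {f g : ℕ → ℝ} (hf : Summable fun i => |f i| ^ p)
    (hg : Summable fun i => |g i| ^ p) : Summable fun i => |f i - g i| ^ p := by
  have hp' : 0 < (ENNReal.ofReal p).toReal := by rwa [ENNReal.toReal_ofReal hp.le]
  have hmem {u : ℕ → ℝ} : Memℓp u (ENNReal.ofReal p) ↔ Summable fun i => |u i| ^ p := by
    rw [memℓp_gen_iff hp', ENNReal.toReal_ofReal hp.le]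
    rfl
  exact hmem.1 <| (hmem.2 hf).sub (hmem.2 hg)

theorem summable_abs_rpow_weightedShift (hp : 0 ≤ p) {w : ℕ → ℝ} {C : ℝ}
    (hw : ∀ n, |w n| ≤ C) {z : ℕ → ℝ} (hz : Summable fun i => |z i| ^ p) :
    Summable fun i => |weightedShift w z i| ^ p := by
  refine .of_nonneg_of_le (fun i => by positivity) (fun i => ?_)
    (((summable_nat_add_iff 1).2 hz).mul_left (C ^ p))
  rw [weightedShift, abs_mul, Real.mul_rpow (abs_nonneg _) (abs_nonneg _)]
  gcongr
  exact hw _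

theorem summable_abs_rpow_weightedShift_iterate (hp : 0 ≤ p) {w : ℕ → ℝ} {C : ℝ}
    (hw : ∀ n, |w n| ≤ C) {z : ℕ → ℝ} (hz : Summable fun i => |z i| ^ p) (n : ℕ) :
    Summable fun i => |(weightedShift w)^[n] z i| ^ p := by
  induction n with
  | zero => exact hz
  | succ n ih =>
    simp only [Function.iterate_succ_apply']
    exact summable_abs_rpow_weightedShift hp hw ih

theorem tendsto_zero_of_tendsto_abs_rpow (hp : 0 < p) {ι : Type*} {l : Filter ι} {u : ι → ℝ}
    (h : Tendsto (fun k => |u k| ^ p) l (𝓝 0)) : Tendsto u l (𝓝 0) := by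
  have h' := h.rpow_const (p := p⁻¹) (Or.inr (by positivity))
  rw [Real.zero_rpow (inv_ne_zero hp.ne')] at h'
  simp only [Real.rpow_rpow_inv (abs_nonneg _) hp.ne'] at h'
  exact (tendsto_zero_iff_abs_tendsto_zero u).2 h'

theorem tendsto_apply_of_tendsto_tsum_abs_sub_rpow (hp : 0 < p) {ι : Type*} {l : Filter ι}
    {f : ι → ℕ → ℝ} {y : ℕ → ℝ} (hs : ∀ k, Summable fun i => |f k i - y i| ^ p)
    (h : Tendsto (fun k => ∑' i, |f k i - y i| ^ p) l (𝓝 0)) (i : ℕ) :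
    Tendsto (fun k => f k i) l (𝓝 (y i)) := by
  have hi : Tendsto (fun k => |f k i - y i| ^ p) l (𝓝 0) :=
    squeeze_zero (fun k => by positivity)
      (fun k => (hs k).le_tsum i fun j _ => by positivity) h
  exact tendsto_sub_nhds_zero_iff.1 (tendsto_zero_of_tendsto_abs_rpow hp hi)

end Summable

theorem prod_Icc_one_mul_prod_Ioc {M : Type*} [CommMonoid M] (f : ℕ → M) {a b : ℕ}
    (hab : a ≤ b) :
    (∏ ν ∈ Icc 1 a, f ν) * ∏ ν ∈ Ioc a b, f ν = ∏ ν ∈ Icc 1 b, f ν := by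
  rw [← Nat.zero_add 1, Icc_add_one_left_eq_Ioc, Icc_add_one_left_eq_Ioc]
  exact prod_Ioc_consecutive f (Nat.zero_le a) hab

theorem tendsto_weightedShift_iterate_apply_zero {w : ℕ → ℝ} (hw : ∀ n, w n ≠ 0)
    (hbdd : BddAbove (Set.range fun n => ∏ ν ∈ Icc 1 n, |w ν|)) {x : ℕ → ℝ}
    (hx : Tendsto x atTop (𝓝 0)) (i : ℕ) :
    Tendsto (fun n => (weightedShift w)^[n] x i) atTop (𝓝 0) := by
  obtain ⟨M, hM⟩ := hbdd
  set P := ∏ ν ∈ Icc 1 i, |w ν|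
  have hP : 0 < P := prod_pos fun ν _ => abs_pos.2 (hw ν)
  have hbound (n : ℕ) : |(weightedShift w)^[n] x i| ≤ M / P * |x (i + n)| := by
    rw [div_mul_eq_mul_div, le_div_iff₀ hP]
    calc |(weightedShift w)^[n] x i| * P = (∏ ν ∈ Icc 1 (i + n), |w ν|) * |x (i + n)| := by
          rw [weightedShift_iterate_apply, abs_mul, abs_prod, mul_right_comm, mul_comm _ P,
            prod_Icc_one_mul_prod_Ioc _ (Nat.le_add_right i n)]
      _ ≤ M * |x (i + n)| := by gcongr; exact hM ⟨i + n, rfl⟩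
  have hshift : Tendsto (fun n => x (i + n)) atTop (𝓝 0) :=
    hx.comp (tendsto_atTop_mono (Nat.le_add_left · i) tendsto_id)
  refine squeeze_zero_norm hbound ?_
  simpa using hshift.abs.const_mul (M / P)

theorem stmt8 (p : ℝ) (hp : 1 ≤ p) (w : ℕ → ℝ) (hw0 : ∀ n, w n ≠ 0)
    (C : ℝ) (hbd : ∀ n, |w n| ≤ C)
    -- the unilateral weighted backward shift on sequences
    (Bw : (ℕ → ℝ) → (ℕ → ℝ)) (hBw : Bw = fun z i => w (i + 1) * z (i + 1))
    (x y : ℕ → ℝ)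
    (hx : Summable fun i => |x i| ^ p) (hy : Summable fun i => |y i| ^ p)
    (hy0 : y ≠ 0)
    -- y is a limit point of the orbit: some subsequence of the orbit converges to y in ℓᵖ
    (hlim : ∃ n : ℕ → ℕ, StrictMono n ∧
      Tendsto (fun k => ∑' i : ℕ, |Bw^[n k] x i - y i| ^ p) atTop (nhds 0)) :
    ¬ BddAbove (Set.range fun n : ℕ => ∏ ν ∈ Finset.Icc 1 n, |w ν|) := by
  intro hbdd
  obtain rfl : Bw = weightedShift w := hBw
  obtain ⟨n, hn, htend⟩ := hlim
  obtain ⟨i, hi⟩ := Function.ne_iff.mp hy0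
  have hp0 : 0 < p := by linarith
  -- bounded weights keep the orbit in ℓᵖ, so the `tsum` in `hlim` is not the junk value `0`
  have hsum (k : ℕ) : Summable fun j => |(weightedShift w)^[n k] x j - y j| ^ p :=
    summable_abs_sub_rpow hp0 (summable_abs_rpow_weightedShift_iterate hp0.le hbd hx _) hy
  have hto_y := tendsto_apply_of_tendsto_tsum_abs_sub_rpow hp0 hsum htend i
  have hto_zero := (tendsto_weightedShift_iterate_apply_zero hw0 hbdd
    (tendsto_zero_of_tendsto_abs_rpow hp0 hx.tendsto_atTop_zero) i).comp hn.tendsto_atTop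
  exact hi (tendsto_nhds_unique hto_y hto_zero)
end

section
/- Let B_w be a bounded unilateral weighted backward shift on ℓ^p(ℕ), 1 ≤ p < ∞. If there exist x ∈ ℓ^p and nonzero y ∈ ℓ^p such that for every neighbourhood V of y the set {n ≥ 0 : B_w^n x ∈ V} is syndetic, then ∑_{n=1}^∞ 1/|w₁⋯wₙ|^p < ∞ (equivalently, B_w is chaotic). -/
def Syndetic (A : Set ℕ) : Prop :=
  ∃ N : ℕ, 0 < N ∧ ∀ m : ℕ, ∃ k ∈ A, m ≤ k ∧ k < m + N

theorem stmt9 (p : ℝ) (hp : 1 ≤ p) (w : ℕ → ℝ) (hw0 : ∀ n, w n ≠ 0)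
    (C : ℝ) (hbd : ∀ n, |w n| ≤ C)
    (Bw : (ℕ → ℝ) → (ℕ → ℝ)) (hBw : Bw = fun z i => w (i + 1) * z (i + 1))
    (x y : ℕ → ℝ)
    (hx : Summable fun i => |x i| ^ p) (hy : Summable fun i => |y i| ^ p)
    (hy0 : y ≠ 0)
    -- for every ε-neighbourhood of y, the set of return times is syndetic
    (hsyn : ∀ ε : ℝ, 0 < ε →
      Syndetic {n : ℕ | ∑' i : ℕ, |Bw^[n] x i - y i| ^ p < ε}) :
    Summable (fun n : ℕ => 1 / |∏ ν ∈ Finset.Icc 1 n, w ν| ^ p) := by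
  subst hBw
  have hp0 : (0:ℝ) < p := lt_of_lt_of_le one_pos hp
  set D : ℝ := max C 1 with hD
  have hD1 : (1:ℝ) ≤ D := le_max_right _ _
  have hD0 : (0:ℝ) < D := lt_of_lt_of_le one_pos hD1
  have hDw : ∀ n, |w n| ≤ D := fun n => (hbd n).trans (le_max_left _ _)
  -- iterate formula
  have hiter : ∀ (n : ℕ) (z : ℕ → ℝ) (i : ℕ),
      (fun z i => w (i + 1) * z (i + 1))^[n] z i
        = (∏ ν ∈ Finset.Ioc i (i + n), w ν) * z (i + n) := by
    intro n
    induction n with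
    | zero => intro z i; simp
    | succ n ih =>
      intro z i
      rw [Function.iterate_succ_apply, ih]
      have : i + (n + 1) = (i + n) + 1 := rfl
      rw [this, Finset.prod_Ioc_succ_top (Nat.le_add_right i n)]
      ring
  -- bound on partial products of weights
  have hprodD : ∀ a b : ℕ, a ≤ b → |∏ ν ∈ Finset.Ioc a b, w ν| ≤ D ^ (b - a) := by
    intro a b hab
    rw [Finset.abs_prod]
    calc ∏ ν ∈ Finset.Ioc a b, |w ν| ≤ ∏ _ν ∈ Finset.Ioc a b, D :=
          Finset.prod_le_prod (fun i _ => abs_nonneg _) (fun i _ => hDw i)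
      _ = D ^ (b - a) := by rw [Finset.prod_const, Nat.card_Ioc]
  have hprodpos : ∀ a b : ℕ, 0 < |∏ ν ∈ Finset.Ioc a b, w ν| := by
    intro a b
    rw [abs_pos]
    exact Finset.prod_ne_zero_iff.mpr (fun i _ => hw0 i)
  -- summability of each iterate-distance function
  have hsummA : ∀ n : ℕ,
      Summable (fun i => |(fun z i => w (i + 1) * z (i + 1))^[n] x i - y i| ^ p) := by
    intro n
    have hb : Summable (fun i => (2:ℝ) ^ p * ((D ^ n) ^ p * |x (i + n)| ^ p + |y i| ^ p)) := by
      exact ((((summable_nat_add_iff n).mpr hx).mul_left _).add hy).mul_left _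
    refine Summable.of_nonneg_of_le (fun i => Real.rpow_nonneg (abs_nonneg _) p) (fun i => ?_) hb
    have h1 : |(fun z i => w (i + 1) * z (i + 1))^[n] x i| ≤ D ^ n * |x (i + n)| := by
      rw [hiter n x i, abs_mul]
      have := hprodD i (i + n) (Nat.le_add_right i n)
      have h2 : i + n - i = n := by omega
      rw [h2] at this
      exact mul_le_mul_of_nonneg_right this (abs_nonneg _)
    set a := |(fun z i => w (i + 1) * z (i + 1))^[n] x i|
    have ha : 0 ≤ a := abs_nonneg _
    have hkey : ∀ u v : ℝ, 0 ≤ u → 0 ≤ v → (u + v) ^ p ≤ 2 ^ p * (u ^ p + v ^ p) := by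
      intro u v hu hv
      rcases le_total u v with h | h
      · calc (u + v) ^ p ≤ (2 * v) ^ p :=
              Real.rpow_le_rpow (by linarith) (by linarith) hp0.le
          _ = 2 ^ p * v ^ p := Real.mul_rpow (by norm_num) hv
          _ ≤ 2 ^ p * (u ^ p + v ^ p) := by
              have := Real.rpow_nonneg hu p
              have h2p : (0:ℝ) ≤ (2:ℝ) ^ p := Real.rpow_nonneg (by norm_num) p
              nlinarith
      · calc (u + v) ^ p ≤ (2 * u) ^ p :=
              Real.rpow_le_rpow (by linarith) (by linarith) hp0.le
          _ = 2 ^ p * u ^ p := Real.mul_rpow (by norm_num) hu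
          _ ≤ 2 ^ p * (u ^ p + v ^ p) := by
              have := Real.rpow_nonneg hv p
              have h2p : (0:ℝ) ≤ (2:ℝ) ^ p := Real.rpow_nonneg (by norm_num) p
              nlinarith
    calc |(fun z i => w (i + 1) * z (i + 1))^[n] x i - y i| ^ p
        ≤ (a + |y i|) ^ p := by
          refine Real.rpow_le_rpow (abs_nonneg _) ?_ hp0.le
          exact (abs_sub _ _)
      _ ≤ 2 ^ p * (a ^ p + |y i| ^ p) := hkey a |y i| ha (abs_nonneg _)
      _ ≤ 2 ^ p * ((D ^ n) ^ p * |x (i + n)| ^ p + |y i| ^ p) := by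
          have h2p : (0:ℝ) ≤ (2:ℝ) ^ p := Real.rpow_nonneg (by norm_num) p
          have : a ^ p ≤ (D ^ n) ^ p * |x (i + n)| ^ p := by
            rw [← Real.mul_rpow (pow_nonneg hD0.le n) (abs_nonneg _)]
            exact Real.rpow_le_rpow ha h1 hp0.le
          nlinarith
  -- pick a coordinate where y is nonzero
  obtain ⟨j, hj⟩ : ∃ j, y j ≠ 0 := Function.ne_iff.mp hy0
  have hyj : 0 < |y j| := abs_pos.mpr hj
  -- syndetic set of good return times
  obtain ⟨N, hN0, hNs⟩ := hsyn ((|y j| / 2) ^ p) (Real.rpow_pos_of_pos (by linarith) p)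
  -- for good n : lower bound on the weighted term at coordinate j
  have hgood : ∀ n : ℕ, (∑' i : ℕ, |(fun z i => w (i + 1) * z (i + 1))^[n] x i - y i| ^ p
        < (|y j| / 2) ^ p) →
      |y j| / 2 < |∏ ν ∈ Finset.Ioc j (j + n), w ν| * |x (j + n)| := by
    intro n hn
    have hle := Summable.le_tsum (hsummA n) j (fun i _ => Real.rpow_nonneg (abs_nonneg _) p)
    have hlt : |(fun z i => w (i + 1) * z (i + 1))^[n] x j - y j| ^ p < (|y j| / 2) ^ p :=
      lt_of_le_of_lt hle hn
    have habs : |(fun z i => w (i + 1) * z (i + 1))^[n] x j - y j| < |y j| / 2 := by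
      by_contra h
      push_neg at h
      exact absurd (Real.rpow_le_rpow (by linarith) h hp0.le) (not_le.mpr hlt)
    have h2 : |y j| - |(fun z i => w (i + 1) * z (i + 1))^[n] x j|
        ≤ |(fun z i => w (i + 1) * z (i + 1))^[n] x j - y j| := by
      have h3 := abs_sub_abs_le_abs_sub (y j) ((fun z i => w (i + 1) * z (i + 1))^[n] x j)
      rw [abs_sub_comm] at h3
      linarith
    have h4 : |y j| / 2 < |(fun z i => w (i + 1) * z (i + 1))^[n] x j| := by linarith
    rwa [hiter n x j, abs_mul] at h4
  -- constant
  set K : ℝ := (D ^ (j + N) * (2 / |y j|) / |∏ ν ∈ Finset.Ioc 0 j, w ν|) ^ p with hK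
  -- window sums
  set g : ℕ → ℝ := fun m => ∑ i ∈ Finset.Ico (m + j) (m + j + N), |x i| ^ p with hgdef
  have hgsum : Summable g := by
    have h1 : Summable (fun m => ∑ t ∈ Finset.range N, |x (m + (j + t))| ^ p) :=
      summable_sum (fun t _ => (summable_nat_add_iff (j + t)).mpr hx)
    have h2 : g = fun m => ∑ t ∈ Finset.range N, |x (m + (j + t))| ^ p := by
      funext m
      show (∑ i ∈ Finset.Ico (m + j) (m + j + N), |x i| ^ p)
          = ∑ t ∈ Finset.range N, |x (m + (j + t))| ^ p
      rw [Finset.sum_Ico_eq_sum_range]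
      have h3 : m + j + N - (m + j) = N := by omega
      rw [h3]
      exact Finset.sum_congr rfl (fun t _ => by rw [add_assoc])
    rw [h2]
    exact h1
  -- main bound
  have hbnd : ∀ m : ℕ, 1 / |∏ ν ∈ Finset.Ioc 0 m, w ν| ^ p ≤ K * g m := by
    intro m
    obtain ⟨k, hkmem, hk1, hk2⟩ := hNs m
    have hk : |y j| / 2 < |∏ ν ∈ Finset.Ioc j (j + k), w ν| * |x (j + k)| :=
      hgood k hkmem
    have hmjk : m ≤ j + k := le_trans hk1 (Nat.le_add_left k j)
    have e1 : (∏ ν ∈ Finset.Ioc 0 m, w ν) * ∏ ν ∈ Finset.Ioc m (j + k), w ν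
        = ∏ ν ∈ Finset.Ioc 0 (j + k), w ν :=
      Finset.prod_Ioc_consecutive w (Nat.zero_le m) hmjk
    have e2 : (∏ ν ∈ Finset.Ioc 0 j, w ν) * ∏ ν ∈ Finset.Ioc j (j + k), w ν
        = ∏ ν ∈ Finset.Ioc 0 (j + k), w ν :=
      Finset.prod_Ioc_consecutive w (Nat.zero_le j) (Nat.le_add_right j k)
    have e3 : |∏ ν ∈ Finset.Ioc m (j + k), w ν| ≤ D ^ (j + N) := by
      refine le_trans (hprodD m (j + k) hmjk) ?_
      exact pow_le_pow_right₀ hD1 (by omega)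
    -- first-power bound
    have hmain : 1 / |∏ ν ∈ Finset.Ioc 0 m, w ν|
        ≤ (D ^ (j + N) * (2 / |y j|) / |∏ ν ∈ Finset.Ioc 0 j, w ν|) * |x (j + k)| := by
      have hPm := hprodpos 0 m
      have hPj := hprodpos 0 j
      have hQ := hprodpos j (j + k)
      have hR := hprodpos m (j + k)
      have hDA : (0:ℝ) < D ^ (j + N) := pow_pos hD0 _
      have hxnn : (0:ℝ) ≤ |x (j + k)| := abs_nonneg _
      have s0 : |y j| < 2 * (|∏ ν ∈ Finset.Ioc j (j + k), w ν| * |x (j + k)|) := by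
        linarith
      have s1 : |y j| * |∏ ν ∈ Finset.Ioc 0 j, w ν|
          ≤ 2 * (|∏ ν ∈ Finset.Ioc j (j + k), w ν| * |x (j + k)|)
            * |∏ ν ∈ Finset.Ioc 0 j, w ν| :=
        mul_le_mul_of_nonneg_right s0.le hPj.le
      have s2 : 2 * (|∏ ν ∈ Finset.Ioc j (j + k), w ν| * |x (j + k)|)
            * |∏ ν ∈ Finset.Ioc 0 j, w ν|
          = 2 * (|∏ ν ∈ Finset.Ioc 0 (j + k), w ν| * |x (j + k)|) := by
        rw [← e2, abs_mul]
        ring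
      have s3 : |∏ ν ∈ Finset.Ioc 0 (j + k), w ν| * |x (j + k)|
          ≤ |∏ ν ∈ Finset.Ioc 0 m, w ν| * D ^ (j + N) * |x (j + k)| := by
        have : |∏ ν ∈ Finset.Ioc 0 (j + k), w ν|
            ≤ |∏ ν ∈ Finset.Ioc 0 m, w ν| * D ^ (j + N) := by
          rw [← e1, abs_mul]
          exact mul_le_mul_of_nonneg_left e3 (abs_nonneg _)
        exact mul_le_mul_of_nonneg_right this hxnn
      have s4 : |y j| * |∏ ν ∈ Finset.Ioc 0 j, w ν|
          ≤ 2 * (|∏ ν ∈ Finset.Ioc 0 m, w ν| * D ^ (j + N) * |x (j + k)|) := by linarith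
      rw [div_le_iff₀ hPm]
      have hrw : D ^ (j + N) * (2 / |y j|) / |∏ ν ∈ Finset.Ioc 0 j, w ν| * |x (j + k)|
            * |∏ ν ∈ Finset.Ioc 0 m, w ν|
          = (2 * (|∏ ν ∈ Finset.Ioc 0 m, w ν| * D ^ (j + N) * |x (j + k)|))
            / (|y j| * |∏ ν ∈ Finset.Ioc 0 j, w ν|) := by
        field_simp
      rw [hrw]
      rw [le_div_iff₀ (by positivity)]
      linarith
    -- raise to power p
    have hfin : (1 / |∏ ν ∈ Finset.Ioc 0 m, w ν|) ^ p
        ≤ ((D ^ (j + N) * (2 / |y j|) / |∏ ν ∈ Finset.Ioc 0 j, w ν|) * |x (j + k)|) ^ p :=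
      Real.rpow_le_rpow (by positivity) hmain hp0.le
    have hL : (1 / |∏ ν ∈ Finset.Ioc 0 m, w ν|) ^ p = 1 / |∏ ν ∈ Finset.Ioc 0 m, w ν| ^ p := by
      rw [one_div, one_div, Real.inv_rpow (abs_nonneg _)]
    have hRw : ((D ^ (j + N) * (2 / |y j|) / |∏ ν ∈ Finset.Ioc 0 j, w ν|) * |x (j + k)|) ^ p
        = K * |x (j + k)| ^ p := by
      rw [hK, Real.mul_rpow (by positivity) (abs_nonneg _)]
    rw [hL, hRw] at hfin
    refine le_trans hfin ?_
    have hmem : j + k ∈ Finset.Ico (m + j) (m + j + N) := by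
      rw [Finset.mem_Ico]
      omega
    have hsingle : |x (j + k)| ^ p ≤ g m :=
      Finset.single_le_sum (fun i _ => Real.rpow_nonneg (abs_nonneg _) p) hmem
    have hK0 : 0 ≤ K := Real.rpow_nonneg (by positivity) p
    exact mul_le_mul_of_nonneg_left hsingle hK0
  -- conclude
  have hIcc : ∀ m : ℕ, Finset.Icc 1 m = Finset.Ioc 0 m := fun m => Finset.Icc_add_one_left_eq_Ioc 0 m
  refine Summable.of_nonneg_of_le (fun m => by positivity) (fun m => ?_) (hgsum.mul_left K)
  rw [hIcc m]
  exact hbnd m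
end

section
/- Let B_w be a bounded bilateral weighted backward shift on ℓ^p(ℤ), 1 ≤ p < ∞. If there exist x ∈ ℓ^p(ℤ) and nonzero y ∈ ℓ^p(ℤ) such that for every ε > 0 the set {n ≥ 0 : ‖B_w^n x − y‖ < ε} is syndetic, then the sequence z with zₙ = (w₁⋯wₙ)^{-1} for n ≥ 1, z₀ = 1, and zₙ = w_{n+1}⋯w₀ for n ≤ −1, belongs to ℓ^p(ℤ) (equivalently, B_w is chaotic). -/
lemma IccSplitTop (a b : ℤ) (f : ℤ → ℝ) (h : a ≤ b + 1) :
    ∏ k ∈ Finset.Icc a (b+1), f k = (∏ k ∈ Finset.Icc a b, f k) * f (b+1) := by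
  have : Finset.Icc a (b+1) = insert (b+1) (Finset.Icc a b) := by
    ext t; simp [Finset.mem_Icc]; omega
  rw [this, Finset.prod_insert (by simp), mul_comm]

lemma IccSplitBot (a b : ℤ) (f : ℤ → ℝ) (h : a ≤ b) :
    ∏ k ∈ Finset.Icc a b, f k = f a * ∏ k ∈ Finset.Icc (a+1) b, f k := by
  have : Finset.Icc a b = insert a (Finset.Icc (a+1) b) := by
    ext t; simp [Finset.mem_Icc]; omega
  rw [this, Finset.prod_insert (by simp)]

lemma iterBw (w : ℤ → ℝ) :
    ∀ (n : ℕ) (x : ℤ → ℝ) (k : ℤ), (fun z (k : ℤ) => w (k+1) * z (k+1))^[n] x k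
      = (∏ ν ∈ Finset.Icc (k+1) (k + (n:ℤ)), w ν) * x (k + (n:ℤ)) := by
  intro n
  induction n with
  | zero => intro x k; simp
  | succ n ih =>
    intro x k
    rw [Function.iterate_succ_apply, ih]
    show (∏ ν ∈ Finset.Icc (k+1) (k + (n:ℤ)), w ν) * (w (k + (n:ℤ) + 1) * x (k + (n:ℤ) + 1)) = _
    push_cast
    rw [show k + ((n:ℤ) + 1) = (k + (n:ℤ)) + 1 by ring,
      IccSplitTop (k+1) (k + (n:ℤ)) w (by omega)]
    ring

section zfacts
variable (w : ℤ → ℝ) (hw0 : ∀ k, w k ≠ 0) (z : ℤ → ℝ)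
  (hz : z = fun n => if 0 < n then (∏ ν ∈ Finset.Icc (1 : ℤ) n, w ν)⁻¹
                       else ∏ ν ∈ Finset.Icc (n + 1) 0, w ν)

include hz hw0 in
lemma znez : ∀ m, z m ≠ 0 := by
  intro m; rw [hz]
  by_cases h : 0 < m <;> simp [h, Finset.prod_ne_zero_iff, hw0]

include hz hw0 in
lemma zstep : ∀ m : ℤ, z (m + 1) * w (m + 1) = z m := by
  intro m
  rcases lt_trichotomy m 0 with hm | hm | hm
  · have h1 : ¬ (0 < m + 1) := by omega
    have h2 : ¬ (0 < m) := by omega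
    rw [hz]; simp only [h1, h2, if_false]
    rw [IccSplitBot (m+1) 0 w (by omega)]
    ring
  · subst hm
    rw [hz]; norm_num
    exact inv_mul_cancel₀ (hw0 _)
  · have h1 : 0 < m + 1 := by omega
    rw [hz]; simp only [h1, hm, if_true]
    rw [IccSplitTop 1 m w (by omega)]
    have := hw0 (m+1)
    have h2 : ∏ ν ∈ Finset.Icc (1:ℤ) m, w ν ≠ 0 := by
      rw [Finset.prod_ne_zero_iff]; intro i _; exact hw0 i
    field_simp

include hz hw0 in
lemma zcocycle : ∀ (k : ℤ) (n : ℕ),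
    z (k + (n:ℤ)) * (∏ ν ∈ Finset.Icc (k+1) (k + (n:ℤ)), w ν) = z k := by
  intro k n
  induction n with
  | zero => simp [Finset.Icc_eq_empty (by omega : ¬ k + 1 ≤ k + ((0:ℕ):ℤ))]
  | succ n ih =>
    push_cast
    rw [show k + ((n:ℤ) + 1) = (k + (n:ℤ)) + 1 by ring,
      IccSplitTop (k+1) (k + (n:ℤ)) w (by omega)]
    rw [show z (k + (n:ℤ) + 1) * ((∏ ν ∈ Finset.Icc (k+1) (k + (n:ℤ)), w ν) * w (k + (n:ℤ) + 1))
        = (z ((k + (n:ℤ)) + 1) * w ((k + (n:ℤ)) + 1)) * ∏ ν ∈ Finset.Icc (k+1) (k + (n:ℤ)), w ν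
        from by ring]
    rw [zstep w hw0 z hz (k + (n:ℤ))]
    exact ih
end zfacts

lemma prodBound (w : ℤ → ℝ) (C₁ : ℝ) (hC₁ : ∀ k, |w k| ≤ C₁) (a : ℤ) (r : ℕ) :
    |∏ ν ∈ Finset.Icc (a+1) (a + (r:ℤ)), w ν| ≤ C₁ ^ r := by
  rw [Finset.abs_prod]
  calc ∏ ν ∈ Finset.Icc (a+1) (a + (r:ℤ)), |w ν|
      ≤ ∏ _ν ∈ Finset.Icc (a+1) (a + (r:ℤ)), C₁ :=
        Finset.prod_le_prod (fun i _ => abs_nonneg _) (fun i _ => hC₁ i)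
    _ = C₁ ^ r := by
        rw [Finset.prod_const]
        congr 1
        rw [Int.card_Icc]
        simp

lemma zgrow (w : ℤ → ℝ) (hw0 : ∀ k, w k ≠ 0) (z : ℤ → ℝ)
    (hz : z = fun n => if 0 < n then (∏ ν ∈ Finset.Icc (1 : ℤ) n, w ν)⁻¹
                       else ∏ ν ∈ Finset.Icc (n + 1) 0, w ν)
    (C₁ : ℝ) (hC₁ : ∀ k, |w k| ≤ C₁) :
    ∀ (a : ℤ) (r : ℕ), |z a| ≤ C₁ ^ r * |z (a + (r:ℤ))| := by
  intro a r
  calc |z a| = |z (a + (r:ℤ))| * |∏ ν ∈ Finset.Icc (a+1) (a + (r:ℤ)), w ν| := by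
        rw [← abs_mul, zcocycle w hw0 z hz a r]
    _ ≤ |z (a + (r:ℤ))| * C₁ ^ r :=
        mul_le_mul_of_nonneg_left (prodBound w C₁ hC₁ a r) (abs_nonneg _)
    _ = C₁ ^ r * |z (a + (r:ℤ))| := mul_comm _ _

lemma rpow_add_le (p a b : ℝ) (hp : 0 ≤ p) (ha : 0 ≤ a) (hb : 0 ≤ b) :
    (a + b) ^ p ≤ 2 ^ p * (a ^ p + b ^ p) := by
  rcases le_total a b with h | h
  · calc (a+b)^p ≤ (2*b)^p := Real.rpow_le_rpow (by linarith) (by linarith) hp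
      _ = 2^p * b^p := Real.mul_rpow (by norm_num) hb
      _ ≤ 2^p * (a^p + b^p) := by
          have : (0:ℝ) ≤ a ^ p := Real.rpow_nonneg ha p
          have h2 : (0:ℝ) ≤ (2:ℝ)^p := Real.rpow_nonneg (by norm_num) p
          nlinarith
  · calc (a+b)^p ≤ (2*a)^p := Real.rpow_le_rpow (by linarith) (by linarith) hp
      _ = 2^p * a^p := Real.mul_rpow (by norm_num) ha
      _ ≤ 2^p * (a^p + b^p) := by
          have : (0:ℝ) ≤ b ^ p := Real.rpow_nonneg hb p
          have h2 : (0:ℝ) ≤ (2:ℝ)^p := Real.rpow_nonneg (by norm_num) p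
          nlinarith

theorem stmt15 (p : ℝ) (hp : 1 ≤ p) (w : ℤ → ℝ) (hw0 : ∀ k, w k ≠ 0)
    (C : ℝ) (hbd : ∀ k, |w k| ≤ C)
    (Bw : (ℤ → ℝ) → (ℤ → ℝ)) (hBw : Bw = fun z k => w (k + 1) * z (k + 1))
    (x y : ℤ → ℝ)
    (hx : Summable fun k => |x k| ^ p) (hy : Summable fun k => |y k| ^ p)
    (hy0 : y ≠ 0)
    (hsyn : ∀ ε : ℝ, 0 < ε →
      Syndetic {n : ℕ | ∑' k : ℤ, |Bw^[n] x k - y k| ^ p < ε})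
    (z : ℤ → ℝ)
    (hz : z = fun n => if 0 < n then (∏ ν ∈ Finset.Icc (1 : ℤ) n, w ν)⁻¹
                       else ∏ ν ∈ Finset.Icc (n + 1) 0, w ν) :
    Summable (fun n : ℤ => |z n| ^ p) := by
  subst hBw
  have hp0 : (0:ℝ) < p := lt_of_lt_of_le one_pos hp
  -- basic setup
  obtain ⟨j, hyj⟩ : ∃ j, y j ≠ 0 := by
    by_contra h
    push_neg at h
    exact hy0 (funext fun k => h k)
  set δ : ℝ := |y j| with hδdef
  have hδ : 0 < δ := abs_pos.mpr hyj
  set C₁ : ℝ := max C 1 with hC₁def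
  have hC₁1 : (1:ℝ) ≤ C₁ := le_max_right _ _
  have hC₁0 : (0:ℝ) ≤ C₁ := by linarith
  have hwC₁ : ∀ k, |w k| ≤ C₁ := fun k => le_trans (hbd k) (le_max_left _ _)
  have hε : (0:ℝ) < (δ/2) ^ p := Real.rpow_pos_of_pos (by linarith) p
  obtain ⟨N, hNpos, hNsyn⟩ := hsyn ((δ/2)^p) hε
  simp only [Set.mem_setOf_eq] at hNsyn
  -- iterate formula abbreviations
  have hiter : ∀ (n : ℕ) (k : ℤ), (fun z (k : ℤ) => w (k+1) * z (k+1))^[n] x k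
      = (∏ ν ∈ Finset.Icc (k+1) (k + (n:ℤ)), w ν) * x (k + (n:ℤ)) :=
    fun n k => iterBw w n x k
  -- summability of shifted x and of the error terms
  have hxshift : ∀ c : ℤ, Summable (fun k : ℤ => |x (k + c)| ^ p) := by
    intro c
    exact hx.comp_injective (fun a b h => by omega)
  have sumErr : ∀ n : ℕ,
      Summable (fun k : ℤ => |(fun z (k : ℤ) => w (k+1) * z (k+1))^[n] x k - y k| ^ p) := by
    intro n
    refine Summable.of_nonneg_of_le
      (f := fun k => 2^p * ((C₁^n)^p * |x (k + (n:ℤ))|^p + |y k|^p))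
      (fun k => Real.rpow_nonneg (abs_nonneg _) p) (fun k => ?_) ?_
    · 
      have h1 : |(fun z (k : ℤ) => w (k+1) * z (k+1))^[n] x k - y k|
          ≤ |(fun z (k : ℤ) => w (k+1) * z (k+1))^[n] x k| + |y k| := abs_sub _ _
      have h2 : |(fun z (k : ℤ) => w (k+1) * z (k+1))^[n] x k| ≤ C₁^n * |x (k + (n:ℤ))| := by
        rw [hiter n k, abs_mul]
        exact mul_le_mul_of_nonneg_right (prodBound w C₁ hwC₁ k n) (abs_nonneg _)
      calc |(fun z (k : ℤ) => w (k+1) * z (k+1))^[n] x k - y k| ^ p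
          ≤ (|(fun z (k : ℤ) => w (k+1) * z (k+1))^[n] x k| + |y k|) ^ p :=
            Real.rpow_le_rpow (abs_nonneg _) h1 (le_of_lt hp0)
        _ ≤ 2^p * (|(fun z (k : ℤ) => w (k+1) * z (k+1))^[n] x k|^p + |y k|^p) :=
            rpow_add_le p _ _ (le_of_lt hp0) (abs_nonneg _) (abs_nonneg _)
        _ ≤ 2^p * ((C₁^n)^p * |x (k + (n:ℤ))|^p + |y k|^p) := by
            apply mul_le_mul_of_nonneg_left _ (Real.rpow_nonneg (by norm_num) p)
            apply add_le_add_left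
            calc |(fun z (k : ℤ) => w (k+1) * z (k+1))^[n] x k|^p
                ≤ (C₁^n * |x (k + (n:ℤ))|)^p :=
                  Real.rpow_le_rpow (abs_nonneg _) h2 (le_of_lt hp0)
              _ = (C₁^n)^p * |x (k + (n:ℤ))|^p :=
                  Real.mul_rpow (pow_nonneg hC₁0 n) (abs_nonneg _)
    · apply Summable.mul_left
      exact ((hxshift (n:ℤ)).mul_left _).add hy
  -- coordinatewise bound
  have hcoord : ∀ n : ℕ,
      (∑' k : ℤ, |(fun z (k : ℤ) => w (k+1) * z (k+1))^[n] x k - y k| ^ p) < (δ/2)^p →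
      ∀ k : ℤ, |(fun z (k : ℤ) => w (k+1) * z (k+1))^[n] x k - y k| < δ/2 := by
    intro n h k
    by_contra hcon
    push_neg at hcon
    have h1 : (δ/2)^p ≤ |(fun z (k : ℤ) => w (k+1) * z (k+1))^[n] x k - y k| ^ p :=
      Real.rpow_le_rpow (by linarith) hcon (le_of_lt hp0)
    have h2 : |(fun z (k : ℤ) => w (k+1) * z (k+1))^[n] x k - y k| ^ p
        ≤ ∑' k : ℤ, |(fun z (k : ℤ) => w (k+1) * z (k+1))^[n] x k - y k| ^ p :=
      Summable.le_tsum (sumErr n) k (fun _ _ => Real.rpow_nonneg (abs_nonneg _) p)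
    linarith
  -- identity
  have hid : ∀ (n : ℕ) (k : ℤ),
      (fun z (k : ℤ) => w (k+1) * z (k+1))^[n] x k * z (k + (n:ℤ)) = z k * x (k + (n:ℤ)) := by
    intro n k
    rw [hiter n k]
    linear_combination x (k + (n:ℤ)) * (zcocycle w hw0 z hz k n)
  -- division helper
  have half_le : ∀ u v : ℝ, δ/2 * u ≤ v → u ≤ 2/δ * v := by
    intro u v h
    have hδ2 : (0:ℝ) < δ/2 := by linarith
    have := mul_le_mul_of_nonneg_left h (le_of_lt (by positivity : (0:ℝ) < 2/δ))
    calc u = 2/δ * (δ/2 * u) := by field_simp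
      _ ≤ 2/δ * v := this
  -- positive key estimate
  have hposkey : ∀ n : ℕ,
      (∑' k : ℤ, |(fun z (k : ℤ) => w (k+1) * z (k+1))^[n] x k - y k| ^ p) < (δ/2)^p →
      δ/2 * |z (j + (n:ℤ))| ≤ |z j| * |x (j + (n:ℤ))| := by
    intro n hn
    have hc := hcoord n hn j
    have hB : δ/2 ≤ |(fun z (k : ℤ) => w (k+1) * z (k+1))^[n] x j| := by
      have h3 : |y j| - |(fun z (k : ℤ) => w (k+1) * z (k+1))^[n] x j|
          ≤ |(fun z (k : ℤ) => w (k+1) * z (k+1))^[n] x j - y j| := by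
        rw [abs_sub_comm]
        exact abs_sub_abs_le_abs_sub _ _
      have : δ = |y j| := rfl
      linarith
    calc δ/2 * |z (j + (n:ℤ))|
        ≤ |(fun z (k : ℤ) => w (k+1) * z (k+1))^[n] x j| * |z (j + (n:ℤ))| :=
          mul_le_mul_of_nonneg_right hB (abs_nonneg _)
      _ = |(fun z (k : ℤ) => w (k+1) * z (k+1))^[n] x j * z (j + (n:ℤ))| := (abs_mul _ _).symm
      _ = |z j * x (j + (n:ℤ))| := by rw [hid n j]
      _ = |z j| * |x (j + (n:ℤ))| := abs_mul _ _
  have hposkey' : ∀ n : ℕ,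
      (∑' k : ℤ, |(fun z (k : ℤ) => w (k+1) * z (k+1))^[n] x k - y k| ^ p) < (δ/2)^p →
      |z (j + (n:ℤ))| ≤ (2/δ * |z j|) * |x (j + (n:ℤ))| := by
    intro n hn
    have := half_le _ _ (hposkey n hn)
    calc |z (j + (n:ℤ))| ≤ 2/δ * (|z j| * |x (j + (n:ℤ))|) := this
      _ = (2/δ * |z j|) * |x (j + (n:ℤ))| := by ring
  -- negative key estimate
  have hnegkey : ∀ n n'' : ℕ,
      (∑' k : ℤ, |(fun z (k : ℤ) => w (k+1) * z (k+1))^[n] x k - y k| ^ p) < (δ/2)^p →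
      (∑' k : ℤ, |(fun z (k : ℤ) => w (k+1) * z (k+1))^[n''] x k - y k| ^ p) < (δ/2)^p →
      |z (j + (n'':ℤ) - (n:ℤ))| ≤ (2/δ * |z j|) *
        (|y (j + (n'':ℤ) - (n:ℤ))| +
          |(fun z (k : ℤ) => w (k+1) * z (k+1))^[n] x (j + (n'':ℤ) - (n:ℤ)) - y (j + (n'':ℤ) - (n:ℤ))|) := by
    intro n n'' hn hn''
    set k : ℤ := j + (n'':ℤ) - (n:ℤ) with hkdef
    have hkn : k + (n:ℤ) = j + (n'':ℤ) := by omega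
    have hzpos : 0 < |z (j + (n'':ℤ))| := abs_pos.mpr (znez w hw0 z hz _)
    have hB : |(fun z (k : ℤ) => w (k+1) * z (k+1))^[n] x k|
        ≤ |y k| + |(fun z (k : ℤ) => w (k+1) * z (k+1))^[n] x k - y k| := by
      calc |(fun z (k : ℤ) => w (k+1) * z (k+1))^[n] x k|
          = |y k + ((fun z (k : ℤ) => w (k+1) * z (k+1))^[n] x k - y k)| := by congr 1; ring
        _ ≤ |y k| + |(fun z (k : ℤ) => w (k+1) * z (k+1))^[n] x k - y k| := abs_add_le _ _
    have hkey : δ/2 * |z k| * |z (j + (n'':ℤ))|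
        ≤ (|z j| * (|y k| + |(fun z (k : ℤ) => w (k+1) * z (k+1))^[n] x k - y k|)) * |z (j + (n'':ℤ))| := by
      have hx1 : δ/2 * |z (j + (n'':ℤ))| ≤ |z j| * |x (j + (n'':ℤ))| := hposkey n'' hn''
      have hmul := mul_le_mul_of_nonneg_right hx1 (abs_nonneg (z k))
      have hid2 : z k * x (k + (n:ℤ)) = (fun z (k : ℤ) => w (k+1) * z (k+1))^[n] x k * z (k + (n:ℤ)) :=
        (hid n k).symm
      calc δ/2 * |z k| * |z (j + (n'':ℤ))|
          = δ/2 * |z (j + (n'':ℤ))| * |z k| := by ring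
        _ ≤ |z j| * |x (j + (n'':ℤ))| * |z k| := hmul
        _ = |z j| * |z k * x (j + (n'':ℤ))| := by rw [abs_mul]; ring
        _ = |z j| * |(fun z (k : ℤ) => w (k+1) * z (k+1))^[n] x k * z (j + (n'':ℤ))| := by
            rw [← hkn, hid2]
        _ = |z j| * (|(fun z (k : ℤ) => w (k+1) * z (k+1))^[n] x k| * |z (j + (n'':ℤ))|) := by
            rw [abs_mul]
        _ ≤ |z j| * ((|y k| + |(fun z (k : ℤ) => w (k+1) * z (k+1))^[n] x k - y k|) * |z (j + (n'':ℤ))|) := by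
            apply mul_le_mul_of_nonneg_left _ (abs_nonneg _)
            exact mul_le_mul_of_nonneg_right hB (abs_nonneg _)
        _ = (|z j| * (|y k| + |(fun z (k : ℤ) => w (k+1) * z (k+1))^[n] x k - y k|)) * |z (j + (n'':ℤ))| := by
            ring
    have hkey2 : δ/2 * |z k|
        ≤ |z j| * (|y k| + |(fun z (k : ℤ) => w (k+1) * z (k+1))^[n] x k - y k|) :=
      le_of_mul_le_mul_right (by calc δ/2 * |z k| * |z (j + (n'':ℤ))| ≤ _ := hkey) hzpos
    have := half_le _ _ hkey2
    calc |z k| ≤ 2/δ * (|z j| * (|y k| + |(fun z (k : ℤ) => w (k+1) * z (k+1))^[n] x k - y k|)) := this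
      _ = (2/δ * |z j|) * (|y k| + |(fun z (k : ℤ) => w (k+1) * z (k+1))^[n] x k - y k|) := by ring
  -- constants
  set Q : ℝ := C₁^N * (2/δ * |z j|) with hQdef
  have hQ0 : 0 ≤ Q := by
    apply mul_nonneg (pow_nonneg hC₁0 N)
    exact mul_nonneg (div_nonneg (by norm_num) (le_of_lt hδ)) (abs_nonneg _)
  have hrpnn : ∀ t : ℝ, 0 ≤ |t| ^ p := fun t => Real.rpow_nonneg (abs_nonneg _) p
  -- positive side
  have Txs : ∀ (i : ℕ) (M : ℕ),
      ∑ m ∈ Finset.range M, |x (j + (m:ℤ) + (i:ℤ))| ^ p ≤ ∑' k : ℤ, |x k| ^ p := by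
    intro i M
    calc ∑ m ∈ Finset.range M, |x (j + (m:ℤ) + (i:ℤ))| ^ p
        = ∑ t ∈ (Finset.range M).image (fun m : ℕ => j + (m:ℤ) + (i:ℤ)), |x t| ^ p :=
          (Finset.sum_image (f := fun t : ℤ => |x t| ^ p) (fun a _ b _ h => by
            have h' : j + (a:ℤ) + (i:ℤ) = j + (b:ℤ) + (i:ℤ) := h
            omega)).symm
      _ ≤ ∑' k : ℤ, |x k| ^ p := Summable.sum_le_tsum _ (fun _ _ => hrpnn _) hx
  have Spos : Summable (fun m : ℕ => |z (j + (m:ℤ))| ^ p) := by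
    apply summable_of_sum_range_le (c := Q^p * (N * ∑' k : ℤ, |x k| ^ p)) (fun m => hrpnn _)
    intro M
    have hstep : ∀ m : ℕ, |z (j + (m:ℤ))| ^ p
        ≤ Q^p * ∑ i ∈ Finset.range N, |x (j + (m:ℤ) + (i:ℤ))| ^ p := by
      intro m
      obtain ⟨nm, hnmA, hm1, hm2⟩ := hNsyn m
      have hrN : nm - m < N := by omega
      have hcast : j + (m:ℤ) + ((nm - m : ℕ):ℤ) = j + (nm:ℤ) := by
        push_cast [Nat.cast_sub hm1]
        ring
      have h1 : |z (j + (m:ℤ))| ≤ C₁^(nm - m) * |z (j + (nm:ℤ))| := by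
        have := zgrow w hw0 z hz C₁ hwC₁ (j + (m:ℤ)) (nm - m)
        rwa [hcast] at this
      have h2 : |z (j + (nm:ℤ))| ≤ (2/δ * |z j|) * |x (j + (nm:ℤ))| := by
        have := hposkey' nm hnmA
        calc |z (j + (nm:ℤ))| ≤ 2/δ * |z j| * |x (j + (nm:ℤ))| := this
          _ = (2/δ * |z j|) * |x (j + (nm:ℤ))| := by ring
      have h3 : |z (j + (m:ℤ))| ≤ Q * |x (j + (nm:ℤ))| := by
        calc |z (j + (m:ℤ))| ≤ C₁^(nm - m) * |z (j + (nm:ℤ))| := h1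
          _ ≤ C₁^N * ((2/δ * |z j|) * |x (j + (nm:ℤ))|) :=
            mul_le_mul (pow_le_pow_right₀ hC₁1 (le_of_lt hrN)) h2 (abs_nonneg _)
              (pow_nonneg hC₁0 N)
          _ = Q * |x (j + (nm:ℤ))| := by rw [hQdef]; ring
      calc |z (j + (m:ℤ))| ^ p ≤ (Q * |x (j + (nm:ℤ))|) ^ p :=
            Real.rpow_le_rpow (abs_nonneg _) h3 (le_of_lt hp0)
        _ = Q^p * |x (j + (nm:ℤ))| ^ p := Real.mul_rpow hQ0 (abs_nonneg _)
        _ ≤ Q^p * ∑ i ∈ Finset.range N, |x (j + (m:ℤ) + (i:ℤ))| ^ p := by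
            apply mul_le_mul_of_nonneg_left _ (Real.rpow_nonneg hQ0 p)
            have hmem : nm - m ∈ Finset.range N := Finset.mem_range.mpr hrN
            have := Finset.single_le_sum
              (f := fun i : ℕ => |x (j + (m:ℤ) + (i:ℤ))| ^ p)
              (fun i _ => hrpnn _) hmem
            simpa only [hcast] using this
    calc ∑ m ∈ Finset.range M, |z (j + (m:ℤ))| ^ p
        ≤ ∑ m ∈ Finset.range M, Q^p * ∑ i ∈ Finset.range N, |x (j + (m:ℤ) + (i:ℤ))| ^ p :=
          Finset.sum_le_sum (fun m _ => hstep m)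
      _ = Q^p * ∑ i ∈ Finset.range N, ∑ m ∈ Finset.range M, |x (j + (m:ℤ) + (i:ℤ))| ^ p := by
          rw [← Finset.mul_sum, Finset.sum_comm]
      _ ≤ Q^p * ∑ _i ∈ Finset.range N, ∑' k : ℤ, |x k| ^ p :=
          mul_le_mul_of_nonneg_left (Finset.sum_le_sum (fun i _ => Txs i M))
            (Real.rpow_nonneg hQ0 p)
      _ = Q^p * (N * ∑' k : ℤ, |x k| ^ p) := by
          rw [Finset.sum_const, Finset.card_range, nsmul_eq_mul]
  -- negative side
  have Sneg : Summable (fun m : ℕ => |z (j - (m:ℤ))| ^ p) := by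
    set Ty : ℝ := ∑' k : ℤ, |y k| ^ p with hTy
    apply summable_of_sum_range_le
      (c := (Q^p * 2^p) * (N * (Ty + (δ/2)^p))) (fun m => hrpnn _)
    intro M
    obtain ⟨n, hnA, hn1, hn2⟩ := hNsyn M
    set G : ℕ → ℝ := fun t => |y (j + (t:ℤ) - (n:ℤ))| ^ p +
      |(fun z (k : ℤ) => w (k+1) * z (k+1))^[n] x (j + (t:ℤ) - (n:ℤ)) - y (j + (t:ℤ) - (n:ℤ))| ^ p
      with hGdef
    have hGnn : ∀ t, 0 ≤ G t := fun t => add_nonneg (hrpnn _) (hrpnn _)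
    have hGsum : ∀ s : Finset ℕ, ∑ t ∈ s, G t ≤ Ty + (δ/2)^p := by
      intro s
      rw [hGdef, Finset.sum_add_distrib]
      apply add_le_add
      · calc ∑ t ∈ s, |y (j + (t:ℤ) - (n:ℤ))| ^ p
            = ∑ u ∈ s.image (fun t : ℕ => j + (t:ℤ) - (n:ℤ)), |y u| ^ p :=
              (Finset.sum_image (f := fun u : ℤ => |y u| ^ p) (fun a _ b _ h => by
                have h' : j + (a:ℤ) - (n:ℤ) = j + (b:ℤ) - (n:ℤ) := h
                omega)).symm
          _ ≤ Ty := Summable.sum_le_tsum _ (fun _ _ => hrpnn _) hy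
      · calc ∑ t ∈ s, |(fun z (k : ℤ) => w (k+1) * z (k+1))^[n] x (j + (t:ℤ) - (n:ℤ)) - y (j + (t:ℤ) - (n:ℤ))| ^ p
            = ∑ u ∈ s.image (fun t : ℕ => j + (t:ℤ) - (n:ℤ)),
                |(fun z (k : ℤ) => w (k+1) * z (k+1))^[n] x u - y u| ^ p :=
              (Finset.sum_image
                (f := fun u : ℤ => |(fun z (k : ℤ) => w (k+1) * z (k+1))^[n] x u - y u| ^ p)
                (fun a _ b _ h => by
                have h' : j + (a:ℤ) - (n:ℤ) = j + (b:ℤ) - (n:ℤ) := h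
                omega)).symm
          _ ≤ ∑' k : ℤ, |(fun z (k : ℤ) => w (k+1) * z (k+1))^[n] x k - y k| ^ p :=
              Summable.sum_le_tsum _ (fun _ _ => hrpnn _) (sumErr n)
          _ ≤ (δ/2)^p := le_of_lt hnA
    have hstep : ∀ m ∈ Finset.range M, |z (j - (m:ℤ))| ^ p
        ≤ (Q^p * 2^p) * ∑ i ∈ Finset.range N, G (n - m + i) := by
      intro m hm
      have hmM : m < M := Finset.mem_range.mp hm
      have hmn : m < n := lt_of_lt_of_le hmM hn1
      obtain ⟨n'', hA'', h1'', h2''⟩ := hNsyn (n - m)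
      have hrN : n'' + m - n < N := by omega
      have hcast : j - (m:ℤ) + ((n'' + m - n : ℕ):ℤ) = j + (n'':ℤ) - (n:ℤ) := by
        have : n ≤ n'' + m := by omega
        push_cast [Nat.cast_sub this]
        ring
      have h1 : |z (j - (m:ℤ))| ≤ C₁^(n'' + m - n) * |z (j + (n'':ℤ) - (n:ℤ))| := by
        have := zgrow w hw0 z hz C₁ hwC₁ (j - (m:ℤ)) (n'' + m - n)
        rwa [hcast] at this
      have h2 := hnegkey n n'' hnA hA''
      have h3 : |z (j - (m:ℤ))| ≤ Q * (|y (j + (n'':ℤ) - (n:ℤ))| +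
          |(fun z (k : ℤ) => w (k+1) * z (k+1))^[n] x (j + (n'':ℤ) - (n:ℤ)) - y (j + (n'':ℤ) - (n:ℤ))|) := by
        calc |z (j - (m:ℤ))| ≤ C₁^(n'' + m - n) * |z (j + (n'':ℤ) - (n:ℤ))| := h1
          _ ≤ C₁^N * ((2/δ * |z j|) * (|y (j + (n'':ℤ) - (n:ℤ))| +
              |(fun z (k : ℤ) => w (k+1) * z (k+1))^[n] x (j + (n'':ℤ) - (n:ℤ)) - y (j + (n'':ℤ) - (n:ℤ))|)) :=
            mul_le_mul (pow_le_pow_right₀ hC₁1 (le_of_lt hrN)) h2 (abs_nonneg _)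
              (pow_nonneg hC₁0 N)
          _ = Q * _ := by rw [hQdef]; ring
      have hyerrnn : 0 ≤ |y (j + (n'':ℤ) - (n:ℤ))| +
          |(fun z (k : ℤ) => w (k+1) * z (k+1))^[n] x (j + (n'':ℤ) - (n:ℤ)) - y (j + (n'':ℤ) - (n:ℤ))| :=
        add_nonneg (abs_nonneg _) (abs_nonneg _)
      calc |z (j - (m:ℤ))| ^ p
          ≤ (Q * (|y (j + (n'':ℤ) - (n:ℤ))| +
              |(fun z (k : ℤ) => w (k+1) * z (k+1))^[n] x (j + (n'':ℤ) - (n:ℤ)) - y (j + (n'':ℤ) - (n:ℤ))|)) ^ p :=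
            Real.rpow_le_rpow (abs_nonneg _) h3 (le_of_lt hp0)
        _ = Q^p * (|y (j + (n'':ℤ) - (n:ℤ))| +
              |(fun z (k : ℤ) => w (k+1) * z (k+1))^[n] x (j + (n'':ℤ) - (n:ℤ)) - y (j + (n'':ℤ) - (n:ℤ))|) ^ p :=
            Real.mul_rpow hQ0 hyerrnn
        _ ≤ Q^p * (2^p * G n'') := by
            apply mul_le_mul_of_nonneg_left _ (Real.rpow_nonneg hQ0 p)
            exact rpow_add_le p _ _ (le_of_lt hp0) (abs_nonneg _) (abs_nonneg _)
        _ = (Q^p * 2^p) * G n'' := by ring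
        _ ≤ (Q^p * 2^p) * ∑ i ∈ Finset.range N, G (n - m + i) := by
            apply mul_le_mul_of_nonneg_left _
              (mul_nonneg (Real.rpow_nonneg hQ0 p) (Real.rpow_nonneg (by norm_num) p))
            have hi : n'' - (n - m) ∈ Finset.range N := Finset.mem_range.mpr (by omega)
            have := Finset.single_le_sum (f := fun i : ℕ => G (n - m + i))
              (fun i _ => hGnn _) hi
            have heq : n - m + (n'' - (n - m)) = n'' := by omega
            simpa only [heq] using this
    calc ∑ m ∈ Finset.range M, |z (j - (m:ℤ))| ^ p
        ≤ ∑ m ∈ Finset.range M, (Q^p * 2^p) * ∑ i ∈ Finset.range N, G (n - m + i) :=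
          Finset.sum_le_sum hstep
      _ = (Q^p * 2^p) * ∑ i ∈ Finset.range N, ∑ m ∈ Finset.range M, G (n - m + i) := by
          rw [← Finset.mul_sum, Finset.sum_comm]
      _ ≤ (Q^p * 2^p) * ∑ _i ∈ Finset.range N, (Ty + (δ/2)^p) := by
          apply mul_le_mul_of_nonneg_left _
            (mul_nonneg (Real.rpow_nonneg hQ0 p) (Real.rpow_nonneg (by norm_num) p))
          apply Finset.sum_le_sum
          intro i _
          calc ∑ m ∈ Finset.range M, G (n - m + i)
              = ∑ t ∈ (Finset.range M).image (fun m : ℕ => n - m + i), G t :=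
                (Finset.sum_image (fun a ha b hb h => by
                  have ha' : a < M := Finset.mem_range.mp ha
                  have hb' : b < M := Finset.mem_range.mp hb
                  omega)).symm
            _ ≤ Ty + (δ/2)^p := hGsum _
      _ = (Q^p * 2^p) * (N * (Ty + (δ/2)^p)) := by
          rw [Finset.sum_const, Finset.card_range, nsmul_eq_mul]
  -- conclude
  have hfin : Summable ((fun n : ℤ => |z n| ^ p) ∘ (fun m : ℤ => j + m)) := by
    apply Summable.of_nat_of_neg
    · exact Spos
    · simpa [Function.comp, sub_eq_add_neg] using Sneg
  exact (Equiv.addLeft j).summable_iff.mp hfin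
end
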